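/- For every real ν ≥ 0, every real α with |α| ≤ 1, every t ≥ 0 and every ξ ≥ 0, the series ∑_{n=1}^∞ (ν+n) |C_n^ν(α)| e^{−n(n+2ν)t} φ_{ν,n}(ξ) converges and its sum is at most ρ_ν 2^{−ν} e^{3ξ}. -/

import Mathlib

/-- For real `ν ≥ 0` and integer `n ≥ 0`, the function
`φ_{ν,n}(ξ) = ∑_{m=0}^∞ ξ^(n+2m) / (2^(ν+n+2m) Γ(m+1) Γ(ν+n+m+1))`. -/
noncomputable def phiBessel (ν : ℝ) (n : ℕ) (ξ : ℝ) : ℝ :=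
  ∑' m : ℕ, ξ ^ (n + 2 * m) /
    ((2 : ℝ) ^ (ν + n + 2 * (m : ℝ)) * Real.Gamma ((m : ℝ) + 1) * Real.Gamma (ν + n + m + 1))

/-- The Gegenbauer polynomial `C_n^ν` for `ν ≥ 0`: for `ν > 0`,
`C_n^ν(x) = (1/Γ(ν)) ∑_{m=0}^{⌊n/2⌋} (−1)^m Γ(ν+n−m) (2x)^(n−2m) / (m! (n−2m)!)`;
for `ν = 0`, `C_0^0(x) = 1` and, for `n ≥ 1`,
`C_n^0(x) = ∑_{m=0}^{⌊n/2⌋} (−1)^m Γ(n−m) (2x)^(n−2m) / (Γ(m+1) Γ(n−2m+1))`. -/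
noncomputable def gegenbauer (ν : ℝ) (n : ℕ) (x : ℝ) : ℝ :=
  if ν = 0 then
    (if n = 0 then 1 else
      ∑ m ∈ Finset.range (n / 2 + 1),
        (-1 : ℝ) ^ m * Real.Gamma ((n : ℝ) - m) * (2 * x) ^ (n - 2 * m) /
          (Real.Gamma ((m : ℝ) + 1) * Real.Gamma ((n : ℝ) - 2 * m + 1)))
  else
    (1 / Real.Gamma ν) * ∑ m ∈ Finset.range (n / 2 + 1),
      (-1 : ℝ) ^ m * Real.Gamma (ν + n - m) * (2 * x) ^ (n - 2 * m) /
        ((m.factorial : ℝ) * ((n - 2 * m).factorial : ℝ))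

/-- `ρ_0 = 1` and `ρ_ν = 1/Γ(ν)` for `ν > 0`. -/
noncomputable def rhoNu (ν : ℝ) : ℝ := if ν = 0 then 1 else 1 / Real.Gamma ν


/-!
Bound `|C_n^ν(α)|` by `ρ_ν` times its coefficients taken with positive signs at `x = 1`. Since
`Γ(ν+n+m+1) ≥ (ν+n) Γ(ν+n-j) j! m!`, each such coefficient times `(ν+n) φ_{ν,n}(ξ)` is dominated by a
product of two series that `(2k)! ≤ 4^k k!²` controls: `∑_m (ξ/2)^(2m)/m!² ≤ e^ξ`, and the `j`-sum
`∑_j 2^(n-2j)/(j!² (n-2j)!) ≤ 2^n ∑_j C(n,2j)/n! ≤ 4^n/n!`. So the `n`-th term is at most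
`ρ_ν 2^(-ν) e^ξ (2ξ)^n/n!`, and the sum over `n ≥ 1` is at most `ρ_ν 2^(-ν) e^ξ e^(2ξ)`.
-/

open Real Finset
open scoped Nat

lemma Real.Gamma_mul_factorial_le_Gamma_add {x : ℝ} (hx : 1 ≤ x) (k : ℕ) :
    Gamma x * k ! ≤ Gamma (x + k) := by
  induction k with
  | zero => simp
  | succ k ih =>
    have hk : (k : ℝ) + 1 ≤ x + k := by linarith
    rw [Nat.factorial_succ, Nat.cast_mul, Nat.cast_succ, ← add_assoc, Gamma_add_one (by positivity)]
    calc Gamma x * (((k : ℝ) + 1) * k !) = ((k : ℝ) + 1) * (Gamma x * k !) := by ring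
      _ ≤ (x + k) * Gamma (x + k) :=
        mul_le_mul hk ih
          (mul_nonneg (Gamma_pos_of_pos (by linarith)).le (Nat.cast_nonneg _)) (by positivity)

lemma Real.add_mul_Gamma_sub_mul_factorial_mul_factorial_le {ν : ℝ} (hν : 0 ≤ ν) {n j : ℕ}
    (hj : j < n) (m : ℕ) :
    (ν + n) * Gamma (ν + n - j) * (j ! * m !) ≤ Gamma (ν + n + m + 1) := by
  have hjn : (j : ℝ) + 1 ≤ n := by exact_mod_cast hj
  have hΓ := Gamma_mul_factorial_le_Gamma_add (x := ν + n - j) (by linarith) j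
  have hΓ' := Gamma_mul_factorial_le_Gamma_add (x := ν + n + 1) (by linarith) m
  rw [sub_add_cancel] at hΓ
  rw [add_right_comm _ 1, Gamma_add_one (by linarith)] at hΓ'
  calc (ν + n) * Gamma (ν + n - j) * (j ! * m !) = (ν + n) * (Gamma (ν + n - j) * j !) * m ! := by
        ring
    _ ≤ (ν + n) * Gamma (ν + n) * m ! := by gcongr
    _ ≤ Gamma (ν + n + m + 1) := hΓ'

lemma Nat.factorial_two_mul_le_four_pow_mul_sq (m : ℕ) : (2 * m)! ≤ 4 ^ m * m ! ^ 2 := by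
  have h := Nat.choose_mul_factorial_mul_factorial (n := 2 * m) (k := m) (by omega)
  rw [show 2 * m - m = m by omega, ← Nat.centralBinom_eq_two_mul_choose] at h
  rw [← h, mul_assoc, sq]
  exact Nat.mul_le_mul_right _ (Nat.centralBinom_le_four_pow m)

lemma Real.summable_pow_comp_div_factorial {g : ℕ → ℕ} (hg : Function.Injective g) (x : ℝ) :
    Summable fun m => x ^ g m / (g m)! :=
  (Real.summable_pow_div_factorial x).comp_injective hg

lemma Real.tsum_pow_comp_div_factorial_le_exp {g : ℕ → ℕ} (hg : Function.Injective g) {x : ℝ}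
    (hx : 0 ≤ x) : ∑' m, x ^ g m / (g m)! ≤ exp x := by
  have hexp : HasSum (fun k => x ^ k / k !) (exp x) := by
    rw [Real.exp_eq_exp_ℝ]; exact NormedSpace.expSeries_div_hasSum_exp x
  exact hexp.tsum_eq ▸ tsum_comp_le_tsum_of_inj hexp.summable (fun k => by positivity) hg

lemma Real.half_pow_two_mul_div_factorial_sq_le (x : ℝ) (m : ℕ) :
    (x / 2) ^ (2 * m) / (m ! : ℝ) ^ 2 ≤ x ^ (2 * m) / (2 * m)! := by
  have h4 : ((2 * m)! : ℝ) ≤ 4 ^ m * (m ! : ℝ) ^ 2 := by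
    exact_mod_cast Nat.factorial_two_mul_le_four_pow_mul_sq m
  rw [div_pow, pow_mul 2, div_div, show (2 : ℝ) ^ 2 = 4 by norm_num]
  exact div_le_div_of_nonneg_left ((even_two_mul m).pow_nonneg x) (by positivity) h4

lemma Real.summable_half_pow_two_mul_div_factorial_sq (x : ℝ) :
    Summable fun m : ℕ => (x / 2) ^ (2 * m) / (m ! : ℝ) ^ 2 :=
  .of_nonneg_of_le (fun m => div_nonneg ((even_two_mul m).pow_nonneg _) (by positivity))
    (half_pow_two_mul_div_factorial_sq_le x)
    (summable_pow_comp_div_factorial (mul_right_injective₀ two_ne_zero) x)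

lemma Real.tsum_half_pow_two_mul_div_factorial_sq_le_exp {x : ℝ} (hx : 0 ≤ x) :
    ∑' m : ℕ, (x / 2) ^ (2 * m) / (m ! : ℝ) ^ 2 ≤ exp x :=
  ((summable_half_pow_two_mul_div_factorial_sq x).tsum_le_tsum
    (half_pow_two_mul_div_factorial_sq_le x)
    (summable_pow_comp_div_factorial (mul_right_injective₀ two_ne_zero) x)).trans
    (tsum_pow_comp_div_factorial_le_exp (mul_right_injective₀ two_ne_zero) hx)

lemma phiBessel_eq (ν : ℝ) (n : ℕ) (ξ : ℝ) :
    phiBessel ν n ξ =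
      2 ^ (-ν) * ∑' m : ℕ, (ξ / 2) ^ (n + 2 * m) / (m ! * Gamma (ν + n + m + 1)) := by
  rw [phiBessel, ← tsum_mul_left]
  congr 1 with m
  have h2 : (2 : ℝ) ^ (ν + n + 2 * (m : ℝ)) = 2 ^ ν * 2 ^ (n + 2 * m) := by
    rw [add_assoc, rpow_add two_pos, ← rpow_natCast]
    push_cast; rfl
  rw [h2, Gamma_nat_eq_factorial, rpow_neg zero_le_two, div_pow]
  field_simp

lemma phiBessel_nonneg {ν : ℝ} (hν : 0 ≤ ν) (n : ℕ) {ξ : ℝ} (hξ : 0 ≤ ξ) :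
    0 ≤ phiBessel ν n ξ := by
  rw [phiBessel_eq]
  refine mul_nonneg (by positivity) (tsum_nonneg fun m => ?_)
  have : 0 < Gamma (ν + n + m + 1) := Gamma_pos_of_pos (by positivity)
  positivity

lemma add_mul_Gamma_sub_mul_phiBessel_le {ν : ℝ} (hν : 0 ≤ ν) {n j : ℕ} (hj : j < n) {ξ : ℝ}
    (hξ : 0 ≤ ξ) :
    (ν + n) * Gamma (ν + n - j) * phiBessel ν n ξ ≤ 2 ^ (-ν) * ((ξ / 2) ^ n / j !) * exp ξ := by
  set a := (ν + n) * Gamma (ν + n - j)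
  have hjn : (j : ℝ) + 1 ≤ n := by exact_mod_cast hj
  have ha : 0 < a := mul_pos (by linarith) (Gamma_pos_of_pos (by linarith))
  set g : ℕ → ℝ := fun m => (ξ / 2) ^ (2 * m) / (m ! : ℝ) ^ 2
  have hterm : ∀ m : ℕ, a * ((ξ / 2) ^ (n + 2 * m) / (m ! * Gamma (ν + n + m + 1))) ≤
      (ξ / 2) ^ n / j ! * g m := by
    intro m
    have hG := add_mul_Gamma_sub_mul_factorial_mul_factorial_le hν hj m
    calc a * ((ξ / 2) ^ (n + 2 * m) / (m ! * Gamma (ν + n + m + 1)))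
        = a * (ξ / 2) ^ (n + 2 * m) / (m ! * Gamma (ν + n + m + 1)) := by ring
      _ ≤ a * (ξ / 2) ^ (n + 2 * m) / (m ! * (a * (j ! * m !))) := by gcongr
      _ = (ξ / 2) ^ n / j ! * g m := by simp only [g]; field_simp; ring
  have hg := summable_half_pow_two_mul_div_factorial_sq ξ
  calc a * phiBessel ν n ξ
      = 2 ^ (-ν) * ∑' m : ℕ, a * ((ξ / 2) ^ (n + 2 * m) / (m ! * Gamma (ν + n + m + 1))) := by
        rw [phiBessel_eq, tsum_mul_left]; ring
    _ ≤ 2 ^ (-ν) * ∑' m : ℕ, (ξ / 2) ^ n / j ! * g m := by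
        refine mul_le_mul_of_nonneg_left ?_ (by positivity)
        exact (hg.mul_left _).of_nonneg_of_le (fun m => by positivity) hterm |>.tsum_le_tsum
          hterm (hg.mul_left _)
    _ ≤ 2 ^ (-ν) * ((ξ / 2) ^ n / j !) * exp ξ := by
        rw [tsum_mul_left, mul_assoc]
        gcongr
        exact tsum_half_pow_two_mul_div_factorial_sq_le_exp hξ

lemma Nat.sum_range_choose_two_mul_le (n : ℕ) :
    ∑ j ∈ range (n / 2 + 1), n.choose (2 * j) ≤ 2 ^ n := by
  rw [← Nat.sum_range_choose n, ← sum_image (g := (2 * ·)) (by intro a _ b _ h; simpa using h)]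
  refine sum_le_sum_of_subset fun k hk => ?_
  simp only [mem_image, mem_range] at hk ⊢
  omega

lemma sum_two_pow_div_factorial_sq_mul_factorial_le (n : ℕ) :
    ∑ j ∈ range (n / 2 + 1), (2 : ℝ) ^ (n - 2 * j) / ((j ! : ℝ) ^ 2 * (n - 2 * j)!) ≤
      4 ^ n / n ! := by
  have hterm : ∀ j ∈ range (n / 2 + 1), (2 : ℝ) ^ (n - 2 * j) / ((j ! : ℝ) ^ 2 * (n - 2 * j)!) ≤
      2 ^ n / n ! * n.choose (2 * j) := by
    intro j hj
    have hjn : 2 * j ≤ n := by rw [mem_range] at hj; omega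
    have h4 : ((2 * j)! : ℝ) ≤ 4 ^ j * (j ! : ℝ) ^ 2 := by
      exact_mod_cast Nat.factorial_two_mul_le_four_pow_mul_sq j
    have hpow : (2 : ℝ) ^ (n - 2 * j) * 4 ^ j = 2 ^ n := by
      rw [show (4 : ℝ) = 2 ^ 2 by norm_num, ← pow_mul, ← pow_add, Nat.sub_add_cancel hjn]
    rw [Nat.cast_choose ℝ hjn, ← hpow]
    calc (2 : ℝ) ^ (n - 2 * j) / ((j ! : ℝ) ^ 2 * ((n - 2 * j)! : ℝ))
        = 2 ^ (n - 2 * j) * 4 ^ j / (4 ^ j * (j ! : ℝ) ^ 2 * ((n - 2 * j)! : ℝ)) := by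
          field_simp
      _ ≤ 2 ^ (n - 2 * j) * 4 ^ j / (((2 * j)! : ℝ) * ((n - 2 * j)! : ℝ)) := by gcongr
      _ = _ := by field_simp
  have hchoose : (∑ j ∈ range (n / 2 + 1), (n.choose (2 * j) : ℝ)) ≤ 2 ^ n := by
    exact_mod_cast Nat.sum_range_choose_two_mul_le n
  calc _ ≤ ∑ j ∈ range (n / 2 + 1), 2 ^ n / n ! * (n.choose (2 * j) : ℝ) := sum_le_sum hterm
    _ ≤ 2 ^ n / n ! * 2 ^ n := by rw [← mul_sum]; gcongr
    _ = 4 ^ n / n ! := by rw [show (4 : ℝ) = 2 * 2 by norm_num, mul_pow]; ring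

lemma gegenbauer_eq_rhoNu_mul_sum (ν : ℝ) {n : ℕ} (hn : n ≠ 0) (x : ℝ) :
    gegenbauer ν n x = rhoNu ν * ∑ j ∈ range (n / 2 + 1),
      (-1 : ℝ) ^ j * Gamma (ν + n - j) * (2 * x) ^ (n - 2 * j) / (j ! * (n - 2 * j)!) := by
  rcases eq_or_ne ν 0 with rfl | hν
  · rw [gegenbauer, rhoNu, if_pos rfl, if_pos rfl, if_neg hn, one_mul]
    refine sum_congr rfl fun j hj => ?_
    have hjn : 2 * j ≤ n := by rw [mem_range] at hj; omega
    rw [zero_add, Gamma_nat_eq_factorial, ← Gamma_nat_eq_factorial (n - 2 * j)]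
    push_cast [hjn]
    rfl
  · rw [gegenbauer, rhoNu, if_neg hν, if_neg hν]

lemma rhoNu_nonneg {ν : ℝ} (hν : 0 ≤ ν) : 0 ≤ rhoNu ν := by
  unfold rhoNu
  split_ifs with h
  · exact zero_le_one
  · exact one_div_nonneg.mpr (Gamma_pos_of_pos (lt_of_le_of_ne hν (Ne.symm h))).le

noncomputable def gegenbauerMajorant (ν : ℝ) (n : ℕ) : ℝ :=
  ∑ j ∈ range (n / 2 + 1), Gamma (ν + n - j) * 2 ^ (n - 2 * j) / (j ! * (n - 2 * j)!)

lemma abs_gegenbauer_le {ν : ℝ} (hν : 0 ≤ ν) {n : ℕ} (hn : n ≠ 0) {α : ℝ} (hα : |α| ≤ 1) :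
    |gegenbauer ν n α| ≤ rhoNu ν * gegenbauerMajorant ν n := by
  rw [gegenbauer_eq_rhoNu_mul_sum ν hn, abs_mul, abs_of_nonneg (rhoNu_nonneg hν),
    gegenbauerMajorant]
  refine mul_le_mul_of_nonneg_left ((abs_sum_le_sum_abs _ _).trans (sum_le_sum fun j hj => ?_))
    (rhoNu_nonneg hν)
  have hjn : (j : ℝ) + 1 ≤ n := by rw [mem_range] at hj; exact_mod_cast (by omega : j + 1 ≤ n)
  have hΓ : 0 < Gamma (ν + n - j) := Gamma_pos_of_pos (by linarith)
  have h2α : |2 * α| ≤ 2 := by rw [abs_mul, abs_two]; linarith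
  rw [abs_div, abs_mul, abs_mul, abs_pow, abs_pow, abs_neg, abs_one, one_pow, one_mul,
    abs_of_pos hΓ, abs_of_pos (by positivity : (0 : ℝ) < j ! * ((n - 2 * j)! : ℝ))]
  gcongr

lemma add_mul_gegenbauerMajorant_mul_phiBessel_le {ν : ℝ} (hν : 0 ≤ ν) {n : ℕ} (hn : n ≠ 0)
    {ξ : ℝ} (hξ : 0 ≤ ξ) :
    (ν + n) * gegenbauerMajorant ν n * phiBessel ν n ξ ≤
      2 ^ (-ν) * exp ξ * ((2 * ξ) ^ n / n !) := by
  calc (ν + n) * gegenbauerMajorant ν n * phiBessel ν n ξ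
      = ∑ j ∈ range (n / 2 + 1), 2 ^ (n - 2 * j) / (j ! * ((n - 2 * j)! : ℝ)) *
          ((ν + n) * Gamma (ν + n - j) * phiBessel ν n ξ) := by
        rw [gegenbauerMajorant, mul_sum, sum_mul]
        exact sum_congr rfl fun j _ => by ring
    _ ≤ ∑ j ∈ range (n / 2 + 1), 2 ^ (n - 2 * j) / (j ! * ((n - 2 * j)! : ℝ)) *
          (2 ^ (-ν) * ((ξ / 2) ^ n / j !) * exp ξ) := by
        refine sum_le_sum fun j hj => mul_le_mul_of_nonneg_left ?_ (by positivity)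
        exact add_mul_Gamma_sub_mul_phiBessel_le hν (by rw [mem_range] at hj; omega) hξ
    _ = 2 ^ (-ν) * exp ξ * (ξ / 2) ^ n * ∑ j ∈ range (n / 2 + 1),
          (2 : ℝ) ^ (n - 2 * j) / ((j ! : ℝ) ^ 2 * (n - 2 * j)!) := by
        rw [mul_sum]
        exact sum_congr rfl fun j _ => by field_simp
    _ ≤ 2 ^ (-ν) * exp ξ * (ξ / 2) ^ n * (4 ^ n / n !) := by
        gcongr
        exact sum_two_pow_div_factorial_sq_mul_factorial_le n
    _ = 2 ^ (-ν) * exp ξ * ((2 * ξ) ^ n / n !) := by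
        rw [show (4 : ℝ) = 2 * 2 by norm_num, mul_pow, div_pow, mul_pow]; field_simp

lemma gegenbauer_phiBessel_term_le {ν : ℝ} (hν : 0 ≤ ν) {α : ℝ} (hα : |α| ≤ 1) {t : ℝ}
    (ht : 0 ≤ t) {ξ : ℝ} (hξ : 0 ≤ ξ) {n : ℕ} (hn : n ≠ 0) :
    (ν + n) * |gegenbauer ν n α| * exp (-(n * (n + 2 * ν)) * t) * phiBessel ν n ξ ≤
      rhoNu ν * (2 ^ (-ν) * exp ξ * ((2 * ξ) ^ n / n !)) := by
  have hexp : exp (-(n * (n + 2 * ν)) * t) ≤ 1 :=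
    exp_le_one_iff.mpr (mul_nonpos_of_nonpos_of_nonneg (neg_nonpos.mpr (by positivity)) ht)
  have hC := abs_gegenbauer_le hν hn hα
  have hφ := phiBessel_nonneg hν n hξ
  have hCφ : 0 ≤ (ν + n) * (rhoNu ν * gegenbauerMajorant ν n) :=
    mul_nonneg (by positivity) ((abs_nonneg _).trans hC)
  calc (ν + n) * |gegenbauer ν n α| * exp (-(n * (n + 2 * ν)) * t) * phiBessel ν n ξ
      ≤ (ν + n) * (rhoNu ν * gegenbauerMajorant ν n) * 1 * phiBessel ν n ξ := by
        gcongr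
    _ = rhoNu ν * ((ν + n) * gegenbauerMajorant ν n * phiBessel ν n ξ) := by ring
    _ ≤ rhoNu ν * (2 ^ (-ν) * exp ξ * ((2 * ξ) ^ n / n !)) :=
        mul_le_mul_of_nonneg_left (add_mul_gegenbauerMajorant_mul_phiBessel_le hν hn hξ)
          (rhoNu_nonneg hν)

/-- For every real `ν ≥ 0`, every real `α` with `|α| ≤ 1`, every `t ≥ 0` and every
`ξ ≥ 0`, the series `∑_{n=1}^∞ (ν+n) |C_n^ν(α)| e^(−n(n+2ν)t) φ_{ν,n}(ξ)` converges and
its sum is at most `ρ_ν 2^(−ν) e^(3ξ)`. -/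
theorem gegenbauer_phi_exp_series_bound (ν : ℝ) (hν : 0 ≤ ν) (α : ℝ) (hα : |α| ≤ 1)
    (t ξ : ℝ) (ht : 0 ≤ t) (hξ : 0 ≤ ξ) :
    Summable (fun n : ℕ => (ν + ((n + 1 : ℕ) : ℝ)) * |gegenbauer ν (n + 1) α| *
      Real.exp (-(((n + 1 : ℕ) : ℝ) * (((n + 1 : ℕ) : ℝ) + 2 * ν)) * t) *
      phiBessel ν (n + 1) ξ) ∧
    ∑' n : ℕ, (ν + ((n + 1 : ℕ) : ℝ)) * |gegenbauer ν (n + 1) α| *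
        Real.exp (-(((n + 1 : ℕ) : ℝ) * (((n + 1 : ℕ) : ℝ) + 2 * ν)) * t) *
        phiBessel ν (n + 1) ξ ≤
      rhoNu ν * (2 : ℝ) ^ (-ν) * Real.exp (3 * ξ) := by
  have hsucc : Function.Injective (· + 1 : ℕ → ℕ) := add_left_injective 1
  have hterm (n : ℕ) := gegenbauer_phiBessel_term_le hν hα ht hξ (n.succ_ne_zero)
  have hnonneg (n : ℕ) : 0 ≤ (ν + ((n + 1 : ℕ) : ℝ)) * |gegenbauer ν (n + 1) α| *
      exp (-(((n + 1 : ℕ) : ℝ) * (((n + 1 : ℕ) : ℝ) + 2 * ν)) * t) * phiBessel ν (n + 1) ξ := by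
    have := phiBessel_nonneg hν (n + 1) hξ
    positivity
  have hmajorant := ((summable_pow_comp_div_factorial hsucc (2 * ξ)).mul_left
    (2 ^ (-ν) * exp ξ)).mul_left (rhoNu ν)
  refine ⟨hmajorant.of_nonneg_of_le hnonneg hterm, ?_⟩
  calc _ ≤ _ := (hmajorant.of_nonneg_of_le hnonneg hterm).tsum_le_tsum hterm hmajorant
    _ = rhoNu ν * 2 ^ (-ν) * exp ξ * ∑' n : ℕ, (2 * ξ) ^ (n + 1) / (n + 1)! := by
        rw [tsum_mul_left, tsum_mul_left]; ring
    _ ≤ rhoNu ν * 2 ^ (-ν) * exp ξ * exp (2 * ξ) := by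
        have := rhoNu_nonneg hν
        gcongr
        exact tsum_pow_comp_div_factorial_le_exp hsucc (by positivity)
    _ = rhoNu ν * (2 : ℝ) ^ (-ν) * exp (3 * ξ) := by rw [mul_assoc, ← exp_add]; ring_nf
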